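/- Suppose there exists ε₀ ∈ (0,1) such that for all ε ∈ (0, ε₀) and all e with ε < e < (1+ε)/2, one has S(e, e³ − (e−ε)³) = −(1/2)[I₀(ε) + I₀(2e−ε)]. Then there exists a point (e*, t*) in the interior (in ℝ²) of R at which S is not real-analytic, i.e., S does not agree with any real-analytic function on any open neighborhood of (e*, t*). -/

import Mathlib

open MeasureTheory Real Set Filter

noncomputable section

/-- `I₀(u) = (1/2)[u ln u + (1-u) ln(1-u)]`, with the convention `log 0 = 0`
    giving `I₀(0) = I₀(1) = 0`. -/
def I0 (u : ℝ) : ℝ := (u * Real.log u + (1 - u) * Real.log (1 - u)) / 2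

/-- `I₀'(u) = (1/2)[ln u − ln(1−u)]`. -/
def I0d (u : ℝ) : ℝ := (Real.log u - Real.log (1 - u)) / 2

/-- `I₀''(u) = (1/2)[1/u + 1/(1−u)]`. -/
def I0dd (u : ℝ) : ℝ := (1 / u + 1 / (1 - u)) / 2

/-- A graphon: a measurable, symmetric function `[0,1]² → [0,1]`
    (here defined on all of `ℝ²`, with values used only on `[0,1]²`). -/
def IsGraphon (g : ℝ → ℝ → ℝ) : Prop :=
  Measurable (Function.uncurry g) ∧ (∀ x y, g x y = g y x) ∧ ∀ x y, g x y ∈ Icc (0 : ℝ) 1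

/-- The edge density `e(g) = ∫₀¹∫₀¹ g(x,y) dx dy`. -/
def edgeDensity (g : ℝ → ℝ → ℝ) : ℝ :=
  ∫ x in Icc (0 : ℝ) 1, ∫ y in Icc (0 : ℝ) 1, g x y

/-- The triangle density `t(g) = ∫₀¹∫₀¹∫₀¹ g(x,y) g(y,z) g(z,x) dx dy dz`. -/
def triangleDensity (g : ℝ → ℝ → ℝ) : ℝ :=
  ∫ x in Icc (0 : ℝ) 1, ∫ y in Icc (0 : ℝ) 1, ∫ z in Icc (0 : ℝ) 1, g x y * g y z * g z x

/-- The rate function `I(g) = ∫₀¹∫₀¹ I₀(g(x,y)) dx dy`. -/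
def rate (g : ℝ → ℝ → ℝ) : ℝ :=
  ∫ x in Icc (0 : ℝ) 1, ∫ y in Icc (0 : ℝ) 1, I0 (g x y)

/-- Lebesgue measure restricted to `[0,1]`. -/
def unitMeasure : Measure ℝ := volume.restrict (Icc (0 : ℝ) 1)

/-- Two graphons are equivalent if they agree a.e. after composing with
    measure-preserving maps of `[0,1]`. -/
def GraphonEquiv (f g : ℝ → ℝ → ℝ) : Prop :=
  ∃ σ σ' : ℝ → ℝ, MeasurePreserving σ unitMeasure unitMeasure ∧
    MeasurePreserving σ' unitMeasure unitMeasure ∧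
    ∀ᵐ p ∂(unitMeasure.prod unitMeasure), f (σ p.1) (σ p.2) = g (σ' p.1) (σ' p.2)

end

/-- The set `R` of achievable pairs `(e(g), t(g))`. -/
def Rset : Set (ℝ × ℝ) :=
  {q | ∃ g, IsGraphon g ∧ edgeDensity g = q.1 ∧ triangleDensity g = q.2}

/-- The entropy `S(e,t) = −inf { I(g) : e(g) = e, t(g) = t }`. -/
noncomputable def entropy (e t : ℝ) : ℝ :=
  -sInf (rate '' {g | IsGraphon g ∧ edgeDensity g = e ∧ triangleDensity g = t})

/-!
Along the vertical line `e = E` the hypothesis gives, for small `c > 0`,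
`S(E, E³ - c³) = -(I₀(E - c) + I₀(E + c))/2`, and since `I₀'' ≥ 2` this lies at least `c²` below
the limit value `-I₀(E)`. Hence `S(E, ·)` drops like `|Δt|^{2/3}` just below `t = E³` and cannot
even be differentiable there, whereas `(E, E³)` is an interior point of `R`: near it every pair is
realised by a bipodal graphon `a ± s` on two halves, with edge density `a` and triangle density
`a³ + s³`.
-/

open Asymptotics Topology

@[fun_prop]
lemma continuous_I0 : Continuous I0 := by
  unfold I0
  have h : Continuous fun u : ℝ => (1 - u) * log (1 - u) :=
    continuous_mul_log.comp (continuous_const.sub continuous_id)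
  exact (continuous_mul_log.add h).div_const 2

lemma hasDerivAt_I0 {u : ℝ} (h0 : 0 < u) (h1 : u < 1) : HasDerivAt I0 (I0d u) u := by
  have hsub : HasDerivAt (fun v : ℝ => (1 - v) * log (1 - v)) ((log (1 - u) + 1) * (-1)) u :=
    (hasDerivAt_mul_log (by linarith : (1 : ℝ) - u ≠ 0)).comp u ((hasDerivAt_id u).const_sub 1)
  refine (((hasDerivAt_mul_log h0.ne').add hsub).div_const 2).congr_deriv ?_
  unfold I0d
  ring

lemma hasDerivAt_I0d {u : ℝ} (h0 : 0 < u) (h1 : u < 1) : HasDerivAt I0d (I0dd u) u := by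
  have hsub : HasDerivAt (fun v : ℝ => log (1 - v)) ((1 - u)⁻¹ * (-1)) u :=
    (hasDerivAt_log (by linarith : (1 : ℝ) - u ≠ 0)).comp u ((hasDerivAt_id u).const_sub 1)
  refine (((hasDerivAt_log h0.ne').sub hsub).div_const 2).congr_deriv ?_
  unfold I0dd
  ring

lemma two_le_I0dd {u : ℝ} (h0 : 0 < u) (h1 : u < 1) : 2 ≤ I0dd u := by
  have h1' : 0 < 1 - u := by linarith
  unfold I0dd
  rw [div_add_div _ _ h0.ne' h1'.ne', le_div_iff₀ two_pos, le_div_iff₀ (by positivity)]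
  nlinarith [sq_nonneg (2 * u - 1)]

lemma convexOn_I0_sub_sq : ConvexOn ℝ (Ioo 0 1) fun u => I0 u - u ^ 2 := by
  refine convexOn_of_hasDerivWithinAt2_nonneg (f' := fun u => I0d u - 2 * u)
    (f'' := fun u => I0dd u - 2) (convex_Ioo 0 1)
    (continuous_I0.sub (continuous_pow 2)).continuousOn ?_ ?_ ?_ <;>
    rw [interior_Ioo] <;> rintro u ⟨h0, h1⟩
  · exact ((hasDerivAt_I0 h0 h1).sub (by simpa using hasDerivAt_pow 2 u)).hasDerivWithinAt
  · exact ((hasDerivAt_I0d h0 h1).sub (by simpa using (hasDerivAt_id u).const_mul 2))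
      |>.hasDerivWithinAt
  · exact sub_nonneg.mpr (two_le_I0dd h0 h1)

lemma two_mul_I0_add_le {x c : ℝ} (hc : 0 ≤ c) (h0 : 0 < x - c) (h1 : x + c < 1) :
    2 * I0 x + 2 * c ^ 2 ≤ I0 (x - c) + I0 (x + c) := by
  have hmid := convexOn_I0_sub_sq.2 (show x - c ∈ Ioo 0 1 from ⟨h0, by linarith⟩)
    (show x + c ∈ Ioo 0 1 from ⟨by linarith, h1⟩) (by norm_num : (0 : ℝ) ≤ 1 / 2)
    (by norm_num : (0 : ℝ) ≤ 1 / 2) (by norm_num)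
  simp only [smul_eq_mul] at hmid
  rw [show 1 / 2 * (x - c) + 1 / 2 * (x + c) = x by ring] at hmid
  linear_combination 2 * hmid

/-- Differentiability at `T` would make the drop `h 0 - h c = φ T - φ (T - c³)` of size `O(c³)`. -/
lemma not_differentiableAt_of_sub_cube {φ h : ℝ → ℝ} {T κ : ℝ} (hκ : 0 < κ)
    (hh : ContinuousAt h 0) (heq : ∀ᶠ c in 𝓝[>] 0, φ (T - c ^ 3) = h c)
    (hdrop : ∀ᶠ c in 𝓝[>] 0, h c + κ * c ^ 2 ≤ h 0) : ¬DifferentiableAt ℝ φ T := by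
  intro hφ
  have hcube : Tendsto (fun c : ℝ => T - c ^ 3) (𝓝 0) (𝓝 T) :=
    Continuous.tendsto' (by fun_prop) 0 T (by simp)
  have hval : φ T = h 0 :=
    tendsto_nhds_unique (((hφ.continuousAt.tendsto.comp hcube).mono_left
      nhdsWithin_le_nhds).congr' heq) (hh.tendsto.mono_left nhdsWithin_le_nhds)
  have hbig : (fun c => φ (T - c ^ 3) - φ T) =O[𝓝 0] fun c : ℝ => c ^ 3 := by
    simpa [Function.comp_def] using hφ.isBigO_sub.comp_tendsto hcube
  have hsq : (fun c : ℝ => c ^ 2) =O[𝓝[>] 0] fun c => φ (T - c ^ 3) - φ T := by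
    refine IsBigO.of_bound κ⁻¹ ?_
    filter_upwards [heq, hdrop] with c hc hd
    rw [norm_of_nonneg (sq_nonneg c), hc, hval, Real.norm_eq_abs, abs_sub_comm,
      le_inv_mul_iff₀ hκ]
    exact (by linarith : κ * c ^ 2 ≤ h 0 - h c).trans (le_abs_self _)
  have hpos : ∃ᶠ c in 𝓝[>] (0 : ℝ), c ^ 3 ≠ 0 :=
    ((eventually_mem_nhdsWithin : ∀ᶠ c in 𝓝[>] (0 : ℝ), c ∈ Ioi 0).mono
      fun _ hc => pow_ne_zero 3 (ne_of_gt hc)).frequently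
  exact ((isLittleO_pow_pow (by norm_num : 2 < 3)).mono nhdsWithin_le_nhds).not_isBigO hpos
    (hsq.trans (hbig.mono nhdsWithin_le_nhds))

noncomputable def signHalf (x : ℝ) : ℝ := if x ≤ 1 / 2 then 1 else -1

lemma signHalf_mul_self (x : ℝ) : signHalf x * signHalf x = 1 := by
  unfold signHalf; split <;> norm_num

lemma measurable_signHalf : Measurable signHalf :=
  Measurable.ite measurableSet_Iic measurable_const measurable_const

lemma integrableOn_signHalf : IntegrableOn signHalf (Icc 0 1) :=
  (integrable_const (1 : ℝ)).mono' measurable_signHalf.aestronglyMeasurable <|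
    .of_forall fun x => by unfold signHalf; split <;> norm_num

lemma integral_signHalf : ∫ x in Icc (0 : ℝ) 1, signHalf x = 0 := by
  have hleft : ∫ x in Ioc (0 : ℝ) (1 / 2), signHalf x = 1 / 2 := by
    rw [setIntegral_congr_fun measurableSet_Ioc (g := fun _ => (1 : ℝ))
      fun x hx => by rw [signHalf, if_pos hx.2]]
    simp
  have hright : ∫ x in Ioc (1 / 2 : ℝ) 1, signHalf x = -(1 / 2) := by
    rw [setIntegral_congr_fun measurableSet_Ioc (g := fun _ => (-1 : ℝ))
      fun x hx => by rw [signHalf, if_neg (not_le.mpr hx.1)]]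
    norm_num
  rw [integral_Icc_eq_integral_Ioc, ← Ioc_union_Ioc_eq_Ioc (by norm_num : (0 : ℝ) ≤ 1 / 2)
      (by norm_num : (1 / 2 : ℝ) ≤ 1),
    setIntegral_union (Ioc_disjoint_Ioc_of_le le_rfl) measurableSet_Ioc
      (integrableOn_signHalf.mono_set (Ioc_subset_Icc_self.trans (Icc_subset_Icc le_rfl
        (by norm_num))))
      (integrableOn_signHalf.mono_set (Ioc_subset_Icc_self.trans (Icc_subset_Icc
        (by norm_num) le_rfl))),
    hleft, hright]
  norm_num

lemma integral_add_mul_signHalf (A B : ℝ) : ∫ y in Icc (0 : ℝ) 1, (A + B * signHalf y) = A := by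
  rw [integral_add (integrable_const A) (integrableOn_signHalf.const_mul B),
    integral_const_mul, integral_signHalf, setIntegral_const]
  simp

noncomputable def bipodal (a s : ℝ) (x y : ℝ) : ℝ := a + s * (signHalf x * signHalf y)

lemma isGraphon_bipodal {a s : ℝ} (h0 : |s| ≤ a) (h1 : a + |s| ≤ 1) :
    IsGraphon (bipodal a s) := by
  refine ⟨measurable_const.add (((measurable_signHalf.comp measurable_fst).mul
    (measurable_signHalf.comp measurable_snd)).const_mul s), fun x y => by
      unfold bipodal; ring, fun x y => ?_⟩
  unfold bipodal signHalf
  constructor <;> split_ifs <;> linarith [le_abs_self s, neg_abs_le s]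

lemma edgeDensity_bipodal (a s : ℝ) : edgeDensity (bipodal a s) = a := by
  have hrow (x : ℝ) : ∫ y in Icc (0 : ℝ) 1, bipodal a s x y = a := by
    simp_rw [bipodal, ← mul_assoc]
    exact integral_add_mul_signHalf a _
  simp [edgeDensity, hrow]

lemma triangleDensity_bipodal (a s : ℝ) : triangleDensity (bipodal a s) = a ^ 3 + s ^ 3 := by
  have hz (x y : ℝ) : ∫ z in Icc (0 : ℝ) 1, bipodal a s x y * bipodal a s y z * bipodal a s z x
      = (a ^ 3 + s ^ 3) + ((a * s ^ 2 + a ^ 2 * s) * signHalf x) * signHalf y := by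
    -- `signHalf ² = 1` makes the integrand affine in `signHalf z`.
    convert integral_add_mul_signHalf ((a ^ 3 + s ^ 3) + ((a * s ^ 2 + a ^ 2 * s) * signHalf x)
      * signHalf y) ((a + s * (signHalf x * signHalf y)) * (a * s * (signHalf x + signHalf y)))
      using 3 with z
    unfold bipodal
    linear_combination (a + s * (signHalf x * signHalf y)) * s ^ 2 * signHalf x * signHalf y *
      signHalf_mul_self z + s ^ 3 * signHalf x * signHalf x * signHalf_mul_self y +
      s ^ 3 * signHalf_mul_self x
  have hy (x : ℝ) : ∫ y in Icc (0 : ℝ) 1, ∫ z in Icc (0 : ℝ) 1,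
      bipodal a s x y * bipodal a s y z * bipodal a s z x = a ^ 3 + s ^ 3 := by
    simp_rw [hz]
    exact integral_add_mul_signHalf _ _
  simp [triangleDensity, hy]

lemma exists_pow_three_eq_of_abs_le {d r : ℝ} (h : |d| ≤ r ^ 3) : ∃ s, |s| ≤ r ∧ s ^ 3 = d := by
  have hr : 0 ≤ r := (Odd.pow_nonneg_iff (by decide)).mp ((abs_nonneg d).trans h)
  have hd : d ∈ Icc ((-r) ^ 3) (r ^ 3) := by
    rw [Odd.neg_pow (by decide)]
    exact abs_le.mp h
  obtain ⟨s, hs, rfl⟩ := intermediate_value_Icc (by linarith : -r ≤ r)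
    (continuous_pow 3).continuousOn hd
  exact ⟨s, abs_le.mpr hs, rfl⟩

lemma mem_Rset_of_abs_sub_pow_three_le {e t : ℝ} (h : |t - e ^ 3| ≤ min e (1 - e) ^ 3) :
    (e, t) ∈ Rset := by
  obtain ⟨s, hs, hst⟩ := exists_pow_three_eq_of_abs_le h
  refine ⟨bipodal e s, isGraphon_bipodal (hs.trans (min_le_left _ _)) ?_,
    edgeDensity_bipodal e s, ?_⟩
  · linarith [hs.trans (min_le_right _ _)]
  · rw [triangleDensity_bipodal, hst]
    ring

lemma mem_interior_Rset {e : ℝ} (h0 : 0 < e) (h1 : e < 1) : (e, e ^ 3) ∈ interior Rset := by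
  refine mem_interior.mpr ⟨{p | |p.2 - p.1 ^ 3| < min p.1 (1 - p.1) ^ 3},
    fun p hp => mem_Rset_of_abs_sub_pow_three_le hp.le, isOpen_lt (by fun_prop) (by fun_prop), ?_⟩
  have : 0 < min e (1 - e) := lt_min h0 (by linarith)
  simp only [mem_ofPred_eq, sub_self, abs_zero]
  positivity

/-- if the perturbative formula
    `S(e, e³−(e−ε)³) = −(1/2)[I₀(ε)+I₀(2e−ε)]` holds for all small `ε` and all
    `ε < e < (1+ε)/2`, then `S` fails to be real-analytic at some interior
    point of `R`. -/
theorem transition_between_scallops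
    (hyp : ∃ ε₀ : ℝ, 0 < ε₀ ∧ ε₀ < 1 ∧ ∀ ε : ℝ, 0 < ε → ε < ε₀ →
      ∀ e : ℝ, ε < e → e < (1 + ε) / 2 →
        entropy e (e ^ 3 - (e - ε) ^ 3) = -(I0 ε + I0 (2 * e - ε)) / 2) :
    ∃ q : ℝ × ℝ, q ∈ interior Rset ∧
      ¬∃ (f : ℝ × ℝ → ℝ) (U : Set (ℝ × ℝ)), IsOpen U ∧ q ∈ U ∧
        (∀ x ∈ U, AnalyticAt ℝ f x) ∧ ∀ x ∈ U, f x = entropy x.1 x.2 := by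
  obtain ⟨ε₀, hε₀, hε₀1, hS⟩ := hyp
  obtain ⟨E, hE0, hEε₀, hE1⟩ : ∃ E, 0 < E ∧ E < ε₀ ∧ E < 1 / 2 :=
    ⟨ε₀ / 2, by linarith, by linarith, by linarith⟩
  refine ⟨(E, E ^ 3), mem_interior_Rset hE0 (by linarith), ?_⟩
  rintro ⟨f, U, hU, hEU, hfa, hfS⟩
  have hline : Tendsto (fun c : ℝ => (E, E ^ 3 - c ^ 3)) (𝓝[>] 0) (𝓝 (E, E ^ 3)) :=
    (Continuous.tendsto' (by fun_prop) 0 _ (by simp)).mono_left nhdsWithin_le_nhds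
  have hsmall : ∀ᶠ c in 𝓝[>] (0 : ℝ), c ∈ Ioo 0 E := Ioo_mem_nhdsGT hE0
  refine not_differentiableAt_of_sub_cube (φ := fun t => f (E, t)) (T := E ^ 3)
    (h := fun c => -(I0 (E - c) + I0 (E + c)) / 2) one_pos
    (Continuous.continuousAt (by fun_prop)) ?_ ?_
    ((hfa _ hEU).differentiableAt.comp _ (differentiableAt_const E |>.prodMk differentiableAt_id))
  · filter_upwards [hline (hU.mem_nhds hEU), hsmall] with c hcU ⟨hc0, hcE⟩
    rw [hfS _ hcU]
    have h := hS (E - c) (by linarith) (by linarith) E (by linarith) (by linarith)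
    rwa [sub_sub_cancel, show 2 * E - (E - c) = E + c by ring] at h
  · filter_upwards [hsmall] with c ⟨hc0, hcE⟩
    simp only [sub_zero, add_zero]
    linarith [two_mul_I0_add_le (x := E) hc0.le (by linarith) (by linarith)]
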